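/- arXiv:1805.02001 — 2 statements merged into one kernel-verified Lean document; each statement's English description precedes it below -/
import Mathlib

section
/- The cochain DG algebra B(s,t) with underlying graded algebra k⟨x₁,x₂⟩ (generators in degree 1) and differential given by ∂(x₁) = (1+s−st)x₁² + x₁x₂ + x₂x₁ + (1/s)x₂² and ∂(x₂) = sx₁² + x₁x₂ + x₂x₁ + tx₂², where s ∈ k^×, t ∈ k and st ≠ 1, has trivial cohomology: H⁰ = k and Hⁱ = 0 for all i ≥ 1. -/
/-- The degree-`i` homogeneous component of the free algebra `k⟨x_1,...,x_n⟩`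
with all generators in degree `1`: the span of the words of length `i`. -/
noncomputable def deg (k : Type*) [CommRing k] (n : ℕ) (i : ℕ) :
    Submodule k (FreeAlgebra k (Fin n)) :=
  Submodule.span k
    {w | ∃ f : Fin i → Fin n, w = (List.ofFn fun j => FreeAlgebra.ι k (f j)).prod}

/-!
A cochain of positive degree is uniquely `x₀ a₁ + x₁ a₂`. For a cocycle, the Leibniz rule and the
formulas for `∂x₀`, `∂x₁` express `∂a₁` and `∂a₂` through `a₁, a₂` (compare the left `x₀`- and
`x₁`-components of `∂(x₀ a₁ + x₁ a₂) = 0`), and these combine to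
`∂(a₁ - s a₂) = (1 - st)(x₀ a₁ + x₁ a₂)`, so `(a₁ - s a₂)/(1 - st)` is a primitive.
-/

open MonoidAlgebra

namespace FreeAlgebra

variable {R X : Type*} [CommSemiring R]

theorem equivMonoidAlgebraFreeMonoid_ι (x : X) :
    equivMonoidAlgebraFreeMonoid (ι R x) = single (FreeMonoid.of x) 1 := by
  simp [equivMonoidAlgebraFreeMonoid, MonoidAlgebra.of_apply]

theorem coeff_equivMonoidAlgebraFreeMonoid_ι_mul [DecidableEq X] (x y : X) (a : FreeAlgebra R X)
    (w : FreeMonoid X) :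
    (equivMonoidAlgebraFreeMonoid (ι R x * a)).coeff (FreeMonoid.of y * w) =
      if x = y then (equivMonoidAlgebraFreeMonoid a).coeff w else 0 := by
  rw [map_mul equivMonoidAlgebraFreeMonoid, equivMonoidAlgebraFreeMonoid_ι]
  split_ifs with h
  · subst h; simp
  · exact coeff_single_mul_of_forall_mul_ne _ _ fun v hv =>
      h (by simpa using congrArg FreeMonoid.toList hv : x = y ∧ v = w).1

theorem eq_zero_of_sum_ι_mul_eq_zero [Fintype X] {c : X → FreeAlgebra R X}
    (h : ∑ x, ι R x * c x = 0) : c = 0 := by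
  classical
  funext y
  apply equivMonoidAlgebraFreeMonoid.injective
  ext w
  have := congrArg (fun f => (equivMonoidAlgebraFreeMonoid f).coeff (FreeMonoid.of y * w)) h
  simpa only [map_sum, coeff_sum, Finsupp.finsetSum_apply, coeff_equivMonoidAlgebraFreeMonoid_ι_mul,
    Finset.sum_ite_eq', Finset.mem_univ, if_true, map_zero, coeff_zero, Pi.zero_apply,
    Finsupp.coe_zero] using this

end FreeAlgebra

section deg

variable {k : Type*} [CommRing k] {n : ℕ}

theorem deg_zero_eq_span_one : deg k n 0 = k ∙ 1 := by
  simp [deg, Subsingleton.elim _ (Fin.elim0 : Fin 0 → Fin n)]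

theorem ι_mem_deg_one (x : Fin n) : FreeAlgebra.ι k x ∈ deg k n 1 :=
  Submodule.subset_span ⟨fun _ => x, by simp⟩

theorem exists_eq_sum_ι_mul_of_mem_deg_succ {i : ℕ} {a : FreeAlgebra k (Fin n)}
    (ha : a ∈ deg k n (i + 1)) :
    ∃ c : Fin n → FreeAlgebra k (Fin n), (∀ x, c x ∈ deg k n i) ∧
      a = ∑ x, FreeAlgebra.ι k x * c x := by
  classical
  induction ha using Submodule.span_induction with
  | mem w hw =>
    obtain ⟨f, rfl⟩ := hw
    set tail := (List.ofFn fun j : Fin i => FreeAlgebra.ι k (f j.succ)).prod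
    have htail : tail ∈ deg k n i := Submodule.subset_span ⟨fun j => f j.succ, rfl⟩
    refine ⟨Pi.single (f 0) tail, fun x => ?_, ?_⟩
    · rcases eq_or_ne x (f 0) with rfl | hx
      · simpa using htail
      · simp [hx]
    · simp [tail, List.ofFn_succ, Pi.single_apply, mul_ite]
  | zero => exact ⟨0, fun _ => zero_mem _, by simp⟩
  | add a b _ _ ha hb =>
    obtain ⟨c, hc, rfl⟩ := ha
    obtain ⟨c', hc', rfl⟩ := hb
    exact ⟨c + c', fun x => add_mem (hc x) (hc' x), by simp [mul_add, Finset.sum_add_distrib]⟩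
  | smul r a _ ha =>
    obtain ⟨c, hc, rfl⟩ := ha
    exact ⟨r • c, fun x => Submodule.smul_mem _ r (hc x), by simp [Finset.smul_sum]⟩

end deg

section Bst

variable {k : Type*} [Field k] {s t : k} {d : FreeAlgebra k (Fin 2) →ₗ[k] FreeAlgebra k (Fin 2)}

local notation "x₀" => FreeAlgebra.ι k (0 : Fin 2)
local notation "x₁" => FreeAlgebra.ι k (1 : Fin 2)

theorem d_eq_of_d_ι_mul_add_ι_mul_eq_zero
    (hL : ∀ (x : Fin 2) b,
      d (FreeAlgebra.ι k x * b) = d (FreeAlgebra.ι k x) * b - FreeAlgebra.ι k x * d b)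
    (h1 : d x₀ = (1 + s - s * t) • (x₀ * x₀) + x₀ * x₁ + x₁ * x₀ + s⁻¹ • (x₁ * x₁))
    (h2 : d x₁ = s • (x₀ * x₀) + x₀ * x₁ + x₁ * x₀ + t • (x₁ * x₁))
    {a₁ a₂ : FreeAlgebra k (Fin 2)} (hd : d (x₀ * a₁ + x₁ * a₂) = 0) :
    d a₁ = (1 + s - s * t) • (x₀ * a₁) + x₁ * a₁ + s • (x₀ * a₂) + x₁ * a₂ ∧
      d a₂ = x₀ * a₁ + s⁻¹ • (x₁ * a₁) + x₀ * a₂ + t • (x₁ * a₂) := by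
  set P := (1 + s - s * t) • (x₀ * a₁) + x₁ * a₁ + s • (x₀ * a₂) + x₁ * a₂ - d a₁
  set Q := x₀ * a₁ + s⁻¹ • (x₁ * a₁) + x₀ * a₂ + t • (x₁ * a₂) - d a₂
  have hPQ : ∑ x, FreeAlgebra.ι k x * ![P, Q] x = 0 := by
    rw [map_add, hL, hL, h1, h2] at hd
    rw [← hd, Fin.sum_univ_two]
    simp only [P, Q, Matrix.cons_val_zero, Matrix.cons_val_one, mul_add, add_mul, mul_sub,
      smul_mul_assoc, mul_smul_comm, mul_assoc]
    module
  have hc := FreeAlgebra.eq_zero_of_sum_ι_mul_eq_zero hPQ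
  exact ⟨(sub_eq_zero.mp (congrFun hc 0)).symm, (sub_eq_zero.mp (congrFun hc 1)).symm⟩

theorem d_sub_smul_eq_of_d_ι_mul_add_ι_mul_eq_zero (hs : s ≠ 0)
    (hL : ∀ (x : Fin 2) b,
      d (FreeAlgebra.ι k x * b) = d (FreeAlgebra.ι k x) * b - FreeAlgebra.ι k x * d b)
    (h1 : d x₀ = (1 + s - s * t) • (x₀ * x₀) + x₀ * x₁ + x₁ * x₀ + s⁻¹ • (x₁ * x₁))
    (h2 : d x₁ = s • (x₀ * x₀) + x₀ * x₁ + x₁ * x₀ + t • (x₁ * x₁))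
    {a₁ a₂ : FreeAlgebra k (Fin 2)} (hd : d (x₀ * a₁ + x₁ * a₂) = 0) :
    d (a₁ - s • a₂) = (1 - s * t) • (x₀ * a₁ + x₁ * a₂) := by
  obtain ⟨hd₁, hd₂⟩ := d_eq_of_d_ι_mul_add_ι_mul_eq_zero hL h1 h2 hd
  rw [map_sub, map_smul, hd₁, hd₂]
  match_scalars <;> field_simp <;> ring

end Bst

theorem stmt13_general {k : Type*} [Field k] (s t : k)
    (hs : s ≠ 0) (hst : s * t ≠ 1)
    (d : FreeAlgebra k (Fin 2) →ₗ[k] FreeAlgebra k (Fin 2))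
    (hL : ∀ (p : ℕ) (a b : FreeAlgebra k (Fin 2)), a ∈ deg k 2 p →
      d (a * b) = d a * b + ((-1 : k) ^ p) • (a * d b))
    (h1 : d (FreeAlgebra.ι k 0) =
      (1 + s - s * t) • (FreeAlgebra.ι k 0 * FreeAlgebra.ι k 0)
        + FreeAlgebra.ι k 0 * FreeAlgebra.ι k 1
        + FreeAlgebra.ι k 1 * FreeAlgebra.ι k 0
        + s⁻¹ • (FreeAlgebra.ι k 1 * FreeAlgebra.ι k 1))
    (h2 : d (FreeAlgebra.ι k 1) =
      s • (FreeAlgebra.ι k 0 * FreeAlgebra.ι k 0)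
        + FreeAlgebra.ι k 0 * FreeAlgebra.ι k 1
        + FreeAlgebra.ι k 1 * FreeAlgebra.ι k 0
        + t • (FreeAlgebra.ι k 1 * FreeAlgebra.ι k 1)) :
    (∀ a ∈ deg k 2 0, d a = 0) ∧
    (∀ i : ℕ, 1 ≤ i → ∀ a ∈ deg k 2 i, d a = 0 →
      ∃ b ∈ deg k 2 (i - 1), d b = a) := by
  have hd_one : d 1 = 0 := by
    simpa using hL 0 1 1 (by simp [deg_zero_eq_span_one])
  have hL₁ (x : Fin 2) (b) :
      d (FreeAlgebra.ι k x * b) = d (FreeAlgebra.ι k x) * b - FreeAlgebra.ι k x * d b := by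
    simpa [sub_eq_add_neg] using hL 1 _ b (ι_mem_deg_one x)
  refine ⟨fun a ha => ?_, fun i hi a ha hda => ?_⟩
  · rw [deg_zero_eq_span_one] at ha
    obtain ⟨c, rfl⟩ := Submodule.mem_span_singleton.mp ha
    simp [hd_one]
  · obtain ⟨m, rfl⟩ := Nat.exists_eq_add_of_le' hi
    obtain ⟨c, hc, rfl⟩ := exists_eq_sum_ι_mul_of_mem_deg_succ ha
    rw [Fin.sum_univ_two] at hda ⊢
    refine ⟨(1 - s * t)⁻¹ • (c 0 - s • c 1), ?_, ?_⟩
    · exact Submodule.smul_mem _ _ (sub_mem (hc 0) (Submodule.smul_mem _ _ (hc 1)))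
    · rw [map_smul, d_sub_smul_eq_of_d_ι_mul_add_ι_mul_eq_zero hs hL₁ h1 h2 hda, smul_smul,
        inv_mul_cancel₀ (sub_ne_zero.mpr hst.symm), one_smul]

/-- the cochain DG algebra `B(s,t)` on `k⟨x₁,x₂⟩` with
`∂(x₁) = (1+s−st)x₁² + x₁x₂ + x₂x₁ + (1/s)x₂²` and
`∂(x₂) = sx₁² + x₁x₂ + x₂x₁ + tx₂²`, where `s ≠ 0` and `st ≠ 1`,
has trivial cohomology: `H⁰ = k` and `Hⁱ = 0` for all `i ≥ 1`. -/
theorem stmt13 {k : Type*} [Field k] [CharZero k] (s t : k)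
    (hs : s ≠ 0) (hst : s * t ≠ 1)
    (d : FreeAlgebra k (Fin 2) →ₗ[k] FreeAlgebra k (Fin 2))
    (hL : ∀ (p : ℕ) (a b : FreeAlgebra k (Fin 2)), a ∈ deg k 2 p →
      d (a * b) = d a * b + ((-1 : k) ^ p) • (a * d b))
    (h1 : d (FreeAlgebra.ι k 0) =
      (1 + s - s * t) • (FreeAlgebra.ι k 0 * FreeAlgebra.ι k 0)
        + FreeAlgebra.ι k 0 * FreeAlgebra.ι k 1
        + FreeAlgebra.ι k 1 * FreeAlgebra.ι k 0
        + s⁻¹ • (FreeAlgebra.ι k 1 * FreeAlgebra.ι k 1))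
    (h2 : d (FreeAlgebra.ι k 1) =
      s • (FreeAlgebra.ι k 0 * FreeAlgebra.ι k 0)
        + FreeAlgebra.ι k 0 * FreeAlgebra.ι k 1
        + FreeAlgebra.ι k 1 * FreeAlgebra.ι k 0
        + t • (FreeAlgebra.ι k 1 * FreeAlgebra.ι k 1))
    (hdd : ∀ x, d (d x) = 0) :
    (∀ a ∈ deg k 2 0, d a = 0) ∧
    (∀ i : ℕ, 1 ≤ i → ∀ a ∈ deg k 2 i, d a = 0 →
      ∃ b ∈ deg k 2 (i - 1), d b = a) :=
  stmt13_general s t hs hst d hL h1 h2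
end

section
/- For the DG free algebra B(s, 1/s) with s ∈ k^×, s ≠ −1 (defined by the symmetric crisscross pair N¹ = N² = [[s,1],[1,1/s]]), the matrix A = [[s, 1/s + 2],[s+1, (s+1)/s]] is invertible and satisfies a_{11}N¹ + a_{12}N² = AᵀM¹A and a_{21}N¹ + a_{22}N² = AᵀM²A, where M¹ = M² = [[0,0],[0,1]]; hence B(s,1/s) ≅ B₈. -/
open Matrix

/-!
Substituting `x_i ↦ ∑_j a_ij x_j` is an algebra endomorphism of the free algebra that preserves
word length, and for invertible `A` it is inverted by the substitution with `A⁻¹`. It sends the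
quadratic element `∑ M_pq x_p x_q` to that of `AᵀMA`, so the criterion `∑_j a_ij N^j = AᵀM^iA`
says that it intertwines the two differentials on generators; by the graded Leibniz rule it then
intertwines them everywhere. For the matrices at hand both sides of the criterion equal
`(s+1)²/s • N`: each row of `A` sums to `(s+1)²/s`, and `AᵀMA` is the outer square of the
second row `(s+1)(1, 1/s)` of `A`. Finally `det A = -(s+1)²/s`.
-/

namespace FreeAlgebra

variable {R X : Type*} [CommSemiring R]

theorem induction_ι_mul {motive : FreeAlgebra R X → Prop} (one : motive 1)
    (ι_mul : ∀ x a, motive a → motive (ι R x * a))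
    (add : ∀ a b, motive a → motive b → motive (a + b))
    (smul : ∀ (r : R) a, motive a → motive (r • a)) (a : FreeAlgebra R X) : motive a := by
  suffices h : ∀ a b, motive b → motive (a * b) from mul_one a ▸ h a 1 one
  intro a
  induction a with
  | grade0 r =>
    intro b hb
    rw [Algebra.algebraMap_eq_smul_one, smul_mul_assoc, one_mul]
    exact smul r b hb
  | grade1 x => exact ι_mul x
  | mul a a' ha ha' => exact fun b hb => mul_assoc a a' b ▸ ha _ (ha' b hb)
  | add a a' ha ha' => exact fun b hb => (add_mul a a' b).symm ▸ add _ _ (ha b hb) (ha' b hb)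

end FreeAlgebra

open FreeAlgebra

section Grading

variable {k : Type*} [CommRing k] {n : ℕ}

lemma word_mem_deg {i : ℕ} (f : Fin i → Fin n) :
    (List.ofFn fun j => ι k (f j)).prod ∈ deg k n i :=
  Submodule.subset_span ⟨f, rfl⟩

lemma one_mem_deg : (1 : FreeAlgebra k (Fin n)) ∈ deg k n 0 := by
  simpa using word_mem_deg (k := k) (Fin.elim0 : Fin 0 → Fin n)

lemma ι_mem_deg (j : Fin n) : ι k j ∈ deg k n 1 := by
  simpa using word_mem_deg (k := k) fun _ : Fin 1 => j

lemma word_mul_word {p q : ℕ} (f : Fin p → Fin n) (g : Fin q → Fin n) :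
    (List.ofFn fun j => ι k (f j)).prod * (List.ofFn fun j => ι k (g j)).prod =
      (List.ofFn fun j => ι k (Fin.append f g j)).prod := by
  rw [← List.prod_append, ← List.ofFn_fin_append]
  congr 2
  funext j
  refine Fin.addCases (fun i => ?_) (fun i => ?_) j <;> simp

lemma mul_mem_deg {p q : ℕ} {a b : FreeAlgebra k (Fin n)} (ha : a ∈ deg k n p)
    (hb : b ∈ deg k n q) : a * b ∈ deg k n (p + q) := by
  induction ha using Submodule.span_induction with
  | mem x hx =>
    obtain ⟨f, rfl⟩ := hx
    induction hb using Submodule.span_induction with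
    | mem y hy =>
      obtain ⟨g, rfl⟩ := hy
      rw [word_mul_word]
      exact word_mem_deg _
    | zero => simp
    | add y z _ _ hy hz => rw [mul_add]; exact add_mem hy hz
    | smul c y _ hy => rw [mul_smul_comm]; exact Submodule.smul_mem _ c hy
  | zero => simp
  | add x y _ _ hx hy => rw [add_mul]; exact add_mem hx hy
  | smul c x _ hx => rw [smul_mul_assoc]; exact Submodule.smul_mem _ c hx

lemma map_mem_deg (φ : FreeAlgebra k (Fin n) →ₐ[k] FreeAlgebra k (Fin n))
    (hφ : ∀ j, φ (ι k j) ∈ deg k n 1) {i : ℕ} {a : FreeAlgebra k (Fin n)}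
    (ha : a ∈ deg k n i) : φ a ∈ deg k n i := by
  have hword : ∀ (i : ℕ) (f : Fin i → Fin n),
      φ (List.ofFn fun j => ι k (f j)).prod ∈ deg k n i := by
    intro i
    induction i with
    | zero => simpa using one_mem_deg
    | succ m ih =>
      intro f
      rw [List.ofFn_succ, List.prod_cons, map_mul]
      simpa only [add_comm] using mul_mem_deg (hφ (f 0)) (ih fun j => f j.succ)
  induction ha using Submodule.span_induction with
  | mem x hx => obtain ⟨f, rfl⟩ := hx; exact hword i f
  | zero => simp
  | add x y _ _ hx hy => rw [map_add]; exact add_mem hx hy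
  | smul c x _ hx => rw [map_smul]; exact Submodule.smul_mem _ c hx

end Grading

section GradedDerivation

variable {k : Type*} [CommRing k] {n : ℕ}

def IsGradedDerivation (d : FreeAlgebra k (Fin n) →ₗ[k] FreeAlgebra k (Fin n)) : Prop :=
  ∀ (p : ℕ) (a b : FreeAlgebra k (Fin n)), a ∈ deg k n p →
    d (a * b) = d a * b + ((-1 : k) ^ p) • (a * d b)

namespace IsGradedDerivation

variable {d d' : FreeAlgebra k (Fin n) →ₗ[k] FreeAlgebra k (Fin n)}

lemma map_one (hd : IsGradedDerivation d) : d 1 = 0 := by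
  simpa using hd 0 1 1 one_mem_deg

lemma map_mul_of_mem_deg_one (hd : IsGradedDerivation d) {a : FreeAlgebra k (Fin n)}
    (ha : a ∈ deg k n 1) (b : FreeAlgebra k (Fin n)) : d (a * b) = d a * b - a * d b := by
  simp [hd 1 a b ha, sub_eq_add_neg]

theorem map_apply_eq_of_forall_ι (hd : IsGradedDerivation d) (hd' : IsGradedDerivation d')
    (φ : FreeAlgebra k (Fin n) →ₐ[k] FreeAlgebra k (Fin n)) (hφ : ∀ j, φ (ι k j) ∈ deg k n 1)
    (h : ∀ j, φ (d (ι k j)) = d' (φ (ι k j))) (a : FreeAlgebra k (Fin n)) :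
    φ (d a) = d' (φ a) := by
  induction a using FreeAlgebra.induction_ι_mul with
  | one => simp [hd.map_one, hd'.map_one]
  | ι_mul j a ha =>
    rw [hd.map_mul_of_mem_deg_one (ι_mem_deg j), map_mul, hd'.map_mul_of_mem_deg_one (hφ j),
      map_sub, map_mul, map_mul, h, ha]
  | add a b ha hb => simp only [map_add, ha, hb]
  | smul r a ha => simp only [map_smul, ha]

end IsGradedDerivation

end GradedDerivation

section LinearSubstitution

variable {k : Type*} [CommRing k] {n : ℕ}

noncomputable def linearSubst (A : Matrix (Fin n) (Fin n) k) :
    FreeAlgebra k (Fin n) →ₐ[k] FreeAlgebra k (Fin n) :=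
  FreeAlgebra.lift k fun i => ∑ j, A i j • ι k j

@[simp]
lemma linearSubst_ι (A : Matrix (Fin n) (Fin n) k) (i : Fin n) :
    linearSubst A (ι k i) = ∑ j, A i j • ι k j :=
  lift_ι_apply _ _

lemma linearSubst_ι_mem_deg (A : Matrix (Fin n) (Fin n) k) (i : Fin n) :
    linearSubst A (ι k i) ∈ deg k n 1 := by
  rw [linearSubst_ι]
  exact Submodule.sum_mem _ fun j _ => Submodule.smul_mem _ _ (ι_mem_deg j)

lemma linearSubst_comp (A B : Matrix (Fin n) (Fin n) k) :
    (linearSubst A).comp (linearSubst B) = linearSubst (B * A) := by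
  ext i
  simp only [AlgHom.coe_comp, Function.comp_apply, linearSubst_ι, map_sum, map_smul,
    Finset.smul_sum, smul_smul, Matrix.mul_apply, Finset.sum_smul]
  exact Finset.sum_comm

lemma linearSubst_one : linearSubst (1 : Matrix (Fin n) (Fin n) k) = AlgHom.id k _ := by
  ext i
  simp [Matrix.one_apply]

noncomputable def linearSubstEquiv (A : Matrix (Fin n) (Fin n) k) (hA : IsUnit A.det) :
    FreeAlgebra k (Fin n) ≃ₐ[k] FreeAlgebra k (Fin n) :=
  AlgEquiv.ofAlgHom (linearSubst A) (linearSubst A⁻¹)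
    (by rw [linearSubst_comp, Matrix.nonsing_inv_mul _ hA, linearSubst_one])
    (by rw [linearSubst_comp, Matrix.mul_nonsing_inv _ hA, linearSubst_one])

/-- The differential of a crisscross pair is `∂ x_i = quadForm (M i)`. -/
noncomputable def quadForm (M : Matrix (Fin n) (Fin n) k) : FreeAlgebra k (Fin n) :=
  ∑ p, ∑ q, M p q • (ι k p * ι k q)

lemma sum_smul_quadForm (c : Fin n → k) (M : Fin n → Matrix (Fin n) (Fin n) k) :
    ∑ j, c j • quadForm (M j) = quadForm (∑ j, c j • M j) := by
  simp only [quadForm, Finset.smul_sum, smul_smul, Matrix.sum_apply, Matrix.smul_apply,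
    smul_eq_mul, Finset.sum_smul]
  rw [Finset.sum_comm]
  refine Finset.sum_congr rfl fun p _ => Finset.sum_comm

lemma linearSubst_quadForm (A M : Matrix (Fin n) (Fin n) k) :
    linearSubst A (quadForm M) = quadForm (Aᵀ * M * A) := by
  simp only [quadForm, map_sum, map_smul, map_mul, linearSubst_ι, Finset.sum_mul, Finset.mul_sum,
    smul_mul_smul_comm, Finset.smul_sum, smul_smul, Matrix.mul_apply, Matrix.transpose_apply,
    Finset.sum_smul]
  simp only [← Fintype.sum_prod_type']
  let rev : Fin n × Fin n × Fin n × Fin n ≃ Fin n × Fin n × Fin n × Fin n :=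
    ⟨fun x => (x.2.2.2, x.2.2.1, x.2.1, x.1), fun x => (x.2.2.2, x.2.2.1, x.2.1, x.1),
      fun _ => rfl, fun _ => rfl⟩
  exact Fintype.sum_equiv rev _ _ fun x => by simp only [rev, Equiv.coe_fn_mk]; ring_nf

end LinearSubstitution

section Criterion

variable {k : Type*} [CommRing k] {n : ℕ}

theorem linearSubst_map_apply_eq {dM dN : FreeAlgebra k (Fin n) →ₗ[k] FreeAlgebra k (Fin n)}
    (hdM : IsGradedDerivation dM) (hdN : IsGradedDerivation dN)
    {M N : Fin n → Matrix (Fin n) (Fin n) k} (hM : ∀ i, dM (ι k i) = quadForm (M i))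
    (hN : ∀ i, dN (ι k i) = quadForm (N i)) {A : Matrix (Fin n) (Fin n) k}
    (hA : ∀ i, ∑ j, A i j • N j = Aᵀ * M i * A) (a : FreeAlgebra k (Fin n)) :
    linearSubst A (dM a) = dN (linearSubst A a) := by
  refine hdM.map_apply_eq_of_forall_ι hdN _ (linearSubst_ι_mem_deg A) (fun i => ?_) a
  simp only [hM, linearSubst_quadForm, ← hA, ← sum_smul_quadForm, linearSubst_ι, map_sum,
    map_smul, hN]

lemma quadForm_fin_two (M : Matrix (Fin 2) (Fin 2) k) :
    quadForm M = M 0 0 • (ι k 0 * ι k 0) + M 0 1 • (ι k 0 * ι k 1)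
      + M 1 0 • (ι k 1 * ι k 0) + M 1 1 • (ι k 1 * ι k 1) := by
  simp only [quadForm, Fin.sum_univ_two]
  abel

end Criterion

section Crisscross

variable {k : Type*} [Field k] {s : k}

lemma det_crisscross (hs : s ≠ 0) :
    s * ((s + 1) / s) - (s⁻¹ + 2) * (s + 1) = -(s + 1) ^ 2 / s := by
  field_simp
  ring

lemma row_sum_crisscross (hs : s ≠ 0) (i : Fin 2) :
    (!![s, s⁻¹ + 2; s + 1, (s + 1) / s] : Matrix (Fin 2) (Fin 2) k) i 0
      + !![s, s⁻¹ + 2; s + 1, (s + 1) / s] i 1 = (s + 1) ^ 2 / s := by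
  fin_cases i <;>
    simp only [of_apply, cons_val', cons_val_zero, cons_val_one, cons_val_fin_one,
      Fin.zero_eta, Fin.mk_one]
  · field_simp
    ring
  · field_simp

lemma transpose_mul_mul_crisscross (hs : s ≠ 0) :
    (!![s, s⁻¹ + 2; s + 1, (s + 1) / s] : Matrix (Fin 2) (Fin 2) k)ᵀ * !![0, 0; 0, 1]
      * !![s, s⁻¹ + 2; s + 1, (s + 1) / s] = ((s + 1) ^ 2 / s) • !![s, 1; 1, s⁻¹] := by
  ext i j
  fin_cases i <;> fin_cases j <;>
  · simp only [Matrix.mul_apply, transpose_apply, Fin.sum_univ_two, Matrix.smul_apply, of_apply,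
      cons_val', cons_val_zero, cons_val_one, cons_val_fin_one, Fin.zero_eta, Fin.mk_one,
      smul_eq_mul]
    field_simp
    ring

end Crisscross

theorem stmt14_general {k : Type*} [Field k] (s : k) (hs : s ≠ 0) (hs1 : s ≠ -1)
    (dM dN : FreeAlgebra k (Fin 2) →ₗ[k] FreeAlgebra k (Fin 2))
    (hLM : ∀ (p : ℕ) (a b : FreeAlgebra k (Fin 2)), a ∈ deg k 2 p →
      dM (a * b) = dM a * b + ((-1 : k) ^ p) • (a * dM b))
    (hLN : ∀ (p : ℕ) (a b : FreeAlgebra k (Fin 2)), a ∈ deg k 2 p →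
      dN (a * b) = dN a * b + ((-1 : k) ^ p) • (a * dN b))
    (hM1 : dM (FreeAlgebra.ι k 0) = FreeAlgebra.ι k 1 * FreeAlgebra.ι k 1)
    (hM2 : dM (FreeAlgebra.ι k 1) = FreeAlgebra.ι k 1 * FreeAlgebra.ι k 1)
    (hN1 : dN (FreeAlgebra.ι k 0) =
      s • (FreeAlgebra.ι k 0 * FreeAlgebra.ι k 0)
        + FreeAlgebra.ι k 0 * FreeAlgebra.ι k 1
        + FreeAlgebra.ι k 1 * FreeAlgebra.ι k 0
        + s⁻¹ • (FreeAlgebra.ι k 1 * FreeAlgebra.ι k 1))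
    (hN2 : dN (FreeAlgebra.ι k 1) =
      s • (FreeAlgebra.ι k 0 * FreeAlgebra.ι k 0)
        + FreeAlgebra.ι k 0 * FreeAlgebra.ι k 1
        + FreeAlgebra.ι k 1 * FreeAlgebra.ι k 0
        + s⁻¹ • (FreeAlgebra.ι k 1 * FreeAlgebra.ι k 1)) :
    IsUnit (!![s, s⁻¹ + 2; s + 1, (s + 1) / s] : Matrix (Fin 2) (Fin 2) k).det ∧
    (∀ i : Fin 2,
      (!![s, s⁻¹ + 2; s + 1, (s + 1) / s] : Matrix (Fin 2) (Fin 2) k) i 0 •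
          (!![s, 1; 1, s⁻¹] : Matrix (Fin 2) (Fin 2) k)
        + !![s, s⁻¹ + 2; s + 1, (s + 1) / s] i 1 • !![s, 1; 1, s⁻¹] =
      (!![s, s⁻¹ + 2; s + 1, (s + 1) / s] : Matrix (Fin 2) (Fin 2) k)ᵀ *
        (![!![(0 : k), 0; 0, 1], !![(0 : k), 0; 0, 1]] i) *
        !![s, s⁻¹ + 2; s + 1, (s + 1) / s]) ∧
    (∃ f : FreeAlgebra k (Fin 2) ≃ₐ[k] FreeAlgebra k (Fin 2),
      (∀ (i : ℕ), ∀ a ∈ deg k 2 i, f a ∈ deg k 2 i) ∧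
      (∀ a, f (dM a) = dN (f a))) := by
  have hs1' : s + 1 ≠ 0 := fun h => hs1 (eq_neg_of_add_eq_zero_left h)
  set A : Matrix (Fin 2) (Fin 2) k := !![s, s⁻¹ + 2; s + 1, (s + 1) / s]
  set N : Matrix (Fin 2) (Fin 2) k := !![s, 1; 1, s⁻¹]
  set M : Matrix (Fin 2) (Fin 2) k := !![0, 0; 0, 1]
  have hdet : IsUnit A.det := by
    rw [isUnit_iff_ne_zero, Matrix.det_fin_two_of, det_crisscross hs]
    exact div_ne_zero (neg_ne_zero.2 (pow_ne_zero 2 hs1')) hs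
  have hmat : ∀ i : Fin 2, A i 0 • N + A i 1 • N = Aᵀ * ![M, M] i * A := by
    intro i
    rw [← add_smul, row_sum_crisscross hs, ← transpose_mul_mul_crisscross hs]
    fin_cases i <;> rfl
  refine ⟨hdet, hmat, linearSubstEquiv A hdet,
    fun i a ha => map_mem_deg _ (linearSubst_ι_mem_deg A) ha,
    linearSubst_map_apply_eq hLM hLN (M := ![M, M]) (N := fun _ => N) ?_ ?_ ?_⟩
  · intro i
    fin_cases i <;> simp [M, quadForm_fin_two, hM1, hM2]
  · intro i
    fin_cases i <;> simp [N, quadForm_fin_two, hN1, hN2]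
  · simpa [Fin.sum_univ_two] using hmat

/-- for `s ≠ 0`, `s ≠ −1`, the matrix
`A = [[s, 1/s + 2],[s+1, (s+1)/s]]` is invertible and satisfies
`a_{i1}N¹ + a_{i2}N² = AᵀMⁱA` (`i = 1,2`) for `M¹ = M² = [[0,0],[0,1]]`
(defining `B₈`) and `N¹ = N² = [[s,1],[1,1/s]]` (defining `B(s,1/s)`);
hence `B(s,1/s) ≅ B₈` as DG algebras. -/
theorem stmt14 {k : Type*} [Field k] [CharZero k] (s : k) (hs : s ≠ 0) (hs1 : s ≠ -1)
    (dM dN : FreeAlgebra k (Fin 2) →ₗ[k] FreeAlgebra k (Fin 2))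
    (hLM : ∀ (p : ℕ) (a b : FreeAlgebra k (Fin 2)), a ∈ deg k 2 p →
      dM (a * b) = dM a * b + ((-1 : k) ^ p) • (a * dM b))
    (hLN : ∀ (p : ℕ) (a b : FreeAlgebra k (Fin 2)), a ∈ deg k 2 p →
      dN (a * b) = dN a * b + ((-1 : k) ^ p) • (a * dN b))
    (hM1 : dM (FreeAlgebra.ι k 0) = FreeAlgebra.ι k 1 * FreeAlgebra.ι k 1)
    (hM2 : dM (FreeAlgebra.ι k 1) = FreeAlgebra.ι k 1 * FreeAlgebra.ι k 1)
    (hN1 : dN (FreeAlgebra.ι k 0) =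
      s • (FreeAlgebra.ι k 0 * FreeAlgebra.ι k 0)
        + FreeAlgebra.ι k 0 * FreeAlgebra.ι k 1
        + FreeAlgebra.ι k 1 * FreeAlgebra.ι k 0
        + s⁻¹ • (FreeAlgebra.ι k 1 * FreeAlgebra.ι k 1))
    (hN2 : dN (FreeAlgebra.ι k 1) =
      s • (FreeAlgebra.ι k 0 * FreeAlgebra.ι k 0)
        + FreeAlgebra.ι k 0 * FreeAlgebra.ι k 1
        + FreeAlgebra.ι k 1 * FreeAlgebra.ι k 0
        + s⁻¹ • (FreeAlgebra.ι k 1 * FreeAlgebra.ι k 1)) :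
    IsUnit (!![s, s⁻¹ + 2; s + 1, (s + 1) / s] : Matrix (Fin 2) (Fin 2) k).det ∧
    (∀ i : Fin 2,
      (!![s, s⁻¹ + 2; s + 1, (s + 1) / s] : Matrix (Fin 2) (Fin 2) k) i 0 •
          (!![s, 1; 1, s⁻¹] : Matrix (Fin 2) (Fin 2) k)
        + !![s, s⁻¹ + 2; s + 1, (s + 1) / s] i 1 • !![s, 1; 1, s⁻¹] =
      (!![s, s⁻¹ + 2; s + 1, (s + 1) / s] : Matrix (Fin 2) (Fin 2) k)ᵀ *
        (![!![(0 : k), 0; 0, 1], !![(0 : k), 0; 0, 1]] i) *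
        !![s, s⁻¹ + 2; s + 1, (s + 1) / s]) ∧
    (∃ f : FreeAlgebra k (Fin 2) ≃ₐ[k] FreeAlgebra k (Fin 2),
      (∀ (i : ℕ), ∀ a ∈ deg k 2 i, f a ∈ deg k 2 i) ∧
      (∀ a, f (dM a) = dN (f a))) :=
  stmt14_general s hs hs1 dM dN hLM hLN hM1 hM2 hN1 hN2
end
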